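/- Let n ≥ 2, let L > 0, and let C : ℝ → ℝ be an L-Lipschitz function. Define F₂ : ℝ^n → ℝ^n by F₂(x) = x + (C(x_n), 0, …, 0)ᵀ for x = (x₁, …, x_n)ᵀ. Then there is a constant L' ≥ 1, depending only on L and n, such that F₂ is L'-biLipschitz from (ℝ^n, D_{J_n}) to (ℝ^n, D_{J_n}). -/

import Mathlib

open scoped NNReal ENNReal

noncomputable section

/-- Action of a matrix on Euclidean space. -/
def matVec {ι : Type*} [Fintype ι] (M : Matrix ι ι ℝ) (v : EuclideanSpace ℝ ι) :
    EuclideanSpace ℝ ι :=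
  (WithLp.equiv 2 (ι → ℝ)).symm (M.mulVec (WithLp.equiv 2 (ι → ℝ) v))

open Classical in
/-- The parabolic visual quasimetric `D_A` associated with a matrix `A`:
`D_A x x = 0`, and for `x ≠ y`, `D_A x y = eᵗ` where `t` is the smallest real number with
`‖exp(-tA)(x-y)‖ = 1`. -/
def parabolicD {ι : Type*} [Fintype ι] [DecidableEq ι] (A : Matrix ι ι ℝ)
    (x y : EuclideanSpace ℝ ι) : ℝ :=
  if x = y then 0
  else Real.exp (sInf {t : ℝ | ‖matVec (NormedSpace.exp ((-t) • A)) (x - y)‖ = 1})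

/-- The `n × n` matrix with ones on the superdiagonal and zeros elsewhere. -/
def Nmat (n : ℕ) : Matrix (Fin n) (Fin n) ℝ :=
  fun i j => if (j : ℕ) = (i : ℕ) + 1 then 1 else 0

/-- The `n × n` Jordan block `Jₙ = Iₙ + N` with eigenvalue `1`. -/
def Jmat (n : ℕ) : Matrix (Fin n) (Fin n) ℝ := 1 + Nmat n

/-- The shear map `F₂(x) = x + (C(xₙ), 0, …, 0)ᵀ`. -/
def shiftMap {n : ℕ} (hn : 2 ≤ n) (C : ℝ → ℝ) (x : EuclideanSpace ℝ (Fin n)) :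
    EuclideanSpace ℝ (Fin n) :=
  x + (WithLp.equiv 2 (Fin n → ℝ)).symm
    (fun j : Fin n => if j = (⟨0, by omega⟩ : Fin n) then C (x ⟨n - 1, by omega⟩) else 0)


/-!
Write `g t = exp (-t J)`, so that `D (x, y) = exp (τ (x - y))` with `τ v` the first time at which
`‖g t v‖ = 1`. Since `J = 1 + N` with `N` nilpotent, `‖g s‖ ≤ e^{-s} · poly(s) → 0`; fix `s` with
`‖g s‖ (1 + L) ≤ 1`. If two orbits satisfy `‖g t w‖ ≤ (1 + L) ‖g t v‖` for all `t`, then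
`‖g (τ v + s) w‖ ≤ 1`, and the intermediate value theorem gives `τ w ≤ τ v + s`.

For the shear, `F x - F y = v + δ e₁` with `v = x - y` and `|δ| ≤ L |vₙ|`. The vector `e₁` is an
eigenvector of `J` and the last coordinate is a left eigenvector, so
`g t (v + δ e₁) = g t v + e^{-t} δ e₁` and `e^{-t} |δ| ≤ L |(g t v)ₙ| ≤ L ‖g t v‖`. The same holds
with the roles of `v` and `v + δ e₁` exchanged, so `D` changes by at most the factor `e^s`.
-/

open NormedSpace Filter Topology

section SphereTimes

variable {E : Type*} [NormedAddCommGroup E] [NormedSpace ℝ E]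

def sphereTimes (A : E →L[ℝ] E) (v : E) : Set ℝ := {t | ‖exp ((-t) • A) v‖ = 1}

theorem ne_zero_of_forall_norm_exp_neg_smul_apply_le {A : E →L[ℝ] E} {v w : E} {K : ℝ}
    (hv : v ≠ 0) (hvw : ∀ t : ℝ, ‖exp ((-t) • A) v‖ ≤ K * ‖exp ((-t) • A) w‖) : w ≠ 0 := by
  rintro rfl
  simpa [hv] using hvw 0

variable [CompleteSpace E]

theorem exp_neg_add_smul (A : E →L[ℝ] E) (s t : ℝ) :
    exp ((-(s + t)) • A) = exp ((-s) • A) * exp ((-t) • A) := by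
  let _ : NormedAlgebra ℚ (E →L[ℝ] E) := .restrictScalars ℚ ℝ _
  rw [neg_add, add_smul, exp_add_of_commute (((Commute.refl A).smul_left _).smul_right _)]

theorem continuous_exp_neg_smul_apply (A : E →L[ℝ] E) (v : E) :
    Continuous fun t : ℝ => exp ((-t) • A) v := by
  let _ : NormedAlgebra ℚ (E →L[ℝ] E) := .restrictScalars ℚ ℝ _
  exact (exp_continuous.comp (continuous_neg.smul continuous_const)).clm_apply continuous_const

variable {A : E →L[ℝ] E} (hA : Tendsto (fun s : ℝ => ‖exp ((-s) • A)‖) atTop (𝓝 0))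
include hA

theorem eventually_one_lt_norm_exp_neg_smul_apply {v : E} (hv : v ≠ 0) :
    ∀ᶠ t : ℝ in atBot, 1 < ‖exp ((-t) • A) v‖ := by
  refine ((hA.comp tendsto_neg_atBot_atTop).eventually
    (gt_mem_nhds (norm_pos_iff.mpr hv))).mono fun t ht => ?_
  by_contra! hle
  have hv' : exp ((-(-t)) • A) (exp ((-t) • A) v) = v := by
    rw [← mul_apply_eq_comp, ← exp_neg_add_smul, neg_add_cancel, neg_zero, zero_smul,
      exp_zero, one_apply_eq_self]
  refine ht.not_ge ?_
  calc ‖v‖ = ‖exp ((-(-t)) • A) (exp ((-t) • A) v)‖ := by rw [hv']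
    _ ≤ ‖exp ((-(-t)) • A)‖ * ‖exp ((-t) • A) v‖ := ContinuousLinearMap.le_opNorm _ _
    _ ≤ ‖exp ((-(-t)) • A)‖ := mul_le_of_le_one_right (norm_nonneg _) hle

theorem exists_mem_sphereTimes_le {v : E} (hv : v ≠ 0) {b : ℝ} (hb : ‖exp ((-b) • A) v‖ ≤ 1) :
    ∃ t ∈ sphereTimes A v, t ≤ b := by
  obtain ⟨a, ha, hab⟩ :=
    ((eventually_one_lt_norm_exp_neg_smul_apply hA hv).and (eventually_le_atBot b)).exists
  obtain ⟨t, ht, hteq⟩ := intermediate_value_Icc' hab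
    (continuous_exp_neg_smul_apply A v).norm.continuousOn ⟨hb, ha.le⟩
  exact ⟨t, hteq, ht.2⟩

theorem bddBelow_sphereTimes {v : E} (hv : v ≠ 0) : BddBelow (sphereTimes A v) := by
  obtain ⟨T, hT⟩ := eventually_atBot.mp (eventually_one_lt_norm_exp_neg_smul_apply hA hv)
  exact ⟨T, fun t (ht : _ = _) => (not_le.mp fun htT => (hT t htT).ne' ht).le⟩

theorem sInf_mem_sphereTimes {v : E} (hv : v ≠ 0) : sInf (sphereTimes A v) ∈ sphereTimes A v := by
  obtain ⟨b, hb⟩ := ((hA.mul_const ‖v‖).eventually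
    (ge_mem_nhds (by simp : (0 : ℝ) * ‖v‖ < 1))).exists
  obtain ⟨t, ht, -⟩ := exists_mem_sphereTimes_le hA hv
    ((ContinuousLinearMap.le_opNorm _ v).trans hb)
  exact (isClosed_eq (continuous_exp_neg_smul_apply A v).norm continuous_const).csInf_mem
    ⟨t, ht⟩ (bddBelow_sphereTimes hA hv)

theorem sInf_sphereTimes_le_add {v w : E} (hv : v ≠ 0) (hw : w ≠ 0) {K s : ℝ} (hK : 0 ≤ K)
    (hs : ‖exp ((-s) • A)‖ * K ≤ 1) (hwv : ∀ t : ℝ, ‖exp ((-t) • A) w‖ ≤ K * ‖exp ((-t) • A) v‖) :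
    sInf (sphereTimes A w) ≤ sInf (sphereTimes A v) + s := by
  set t₀ := sInf (sphereTimes A v)
  have ht₀ : ‖exp ((-t₀) • A) v‖ = 1 := sInf_mem_sphereTimes hA hv
  have hle : ‖exp ((-(s + t₀)) • A) w‖ ≤ 1 :=
    calc ‖exp ((-(s + t₀)) • A) w‖ ≤ K * ‖exp ((-s) • A) (exp ((-t₀) • A) v)‖ := by
          rw [← mul_apply_eq_comp, ← exp_neg_add_smul]; exact hwv _
      _ ≤ K * ‖exp ((-s) • A)‖ := by
          grw [ContinuousLinearMap.le_opNorm, ht₀, mul_one]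
      _ ≤ 1 := by rwa [mul_comm]
  obtain ⟨t, ht, hts⟩ := exists_mem_sphereTimes_le hA hw hle
  linarith [csInf_le (bddBelow_sphereTimes hA hw) ht]

theorem abs_sInf_sphereTimes_sub_le {v w : E} (hv : v ≠ 0) (hw : w ≠ 0) {K s : ℝ} (hK : 0 ≤ K)
    (hs : ‖exp ((-s) • A)‖ * K ≤ 1)
    (hwv : ∀ t : ℝ, ‖exp ((-t) • A) w‖ ≤ K * ‖exp ((-t) • A) v‖)
    (hvw : ∀ t : ℝ, ‖exp ((-t) • A) v‖ ≤ K * ‖exp ((-t) • A) w‖) :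
    |sInf (sphereTimes A w) - sInf (sphereTimes A v)| ≤ s :=
  abs_sub_le_iff.mpr ⟨by linarith [sInf_sphereTimes_le_add hA hv hw hK hs hwv],
    by linarith [sInf_sphereTimes_le_add hA hw hv hK hs hvw]⟩

end SphereTimes

section NilpotentExp

open Finset

theorem exp_eq_sum_range_of_pow_eq_zero {𝕂 𝔸 : Type*} [Field 𝕂] [CharZero 𝕂] [Ring 𝔸]
    [Algebra 𝕂 𝔸] [TopologicalSpace 𝔸] [IsTopologicalRing 𝔸] {x : 𝔸} {m : ℕ} (hx : x ^ m = 0) :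
    exp x = ∑ k ∈ range m, (k.factorial⁻¹ : 𝕂) • x ^ k := by
  rw [exp_eq_tsum 𝕂]
  refine tsum_eq_sum fun k hk => ?_
  rw [pow_eq_zero_of_le (by simpa using hk) hx, smul_zero]

variable {𝔸 : Type*} [NormedRing 𝔸] [NormedAlgebra ℝ 𝔸] [CompleteSpace 𝔸]

theorem exp_smul_one_add (c : ℝ) (x : 𝔸) : exp (c • (1 + x)) = Real.exp c • exp (c • x) := by
  let _ : NormedAlgebra ℚ 𝔸 := .restrictScalars ℚ ℝ 𝔸
  have hc : exp (c • (1 : 𝔸)) = Real.exp c • 1 := by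
    rw [← Algebra.algebraMap_eq_smul_one, ← algebraMap_exp_comm, Real.exp_eq_exp_ℝ,
      Algebra.algebraMap_eq_smul_one]
  rw [smul_add, exp_add_of_commute ((Commute.one_left x).smul_left c |>.smul_right c), hc,
    smul_one_mul]

theorem tendsto_norm_exp_neg_smul_one_add {x : 𝔸} {m : ℕ} (hx : x ^ m = 0) :
    Tendsto (fun s : ℝ => ‖exp ((-s) • (1 + x))‖) atTop (𝓝 0) := by
  have hbound : ∀ s : ℝ, 0 ≤ s → ‖exp ((-s) • (1 + x))‖ ≤
      ∑ k ∈ range m, ((k.factorial : ℝ)⁻¹ * ‖x ^ k‖) * (s ^ k * Real.exp (-s)) := by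
    intro s hs
    rw [exp_smul_one_add, norm_smul, Real.norm_of_nonneg (Real.exp_nonneg _),
      exp_eq_sum_range_of_pow_eq_zero (𝕂 := ℝ) (x := (-s) • x) (by rw [smul_pow, hx, smul_zero]),
      mul_comm]
    grw [norm_sum_le, Finset.sum_mul]
    refine (Finset.sum_congr rfl fun k _ => ?_).le
    rw [smul_pow, norm_smul, norm_smul, norm_pow, norm_neg, Real.norm_of_nonneg hs,
      Real.norm_of_nonneg (by positivity)]
    ring
  have hlim : Tendsto (fun s : ℝ => ∑ k ∈ range m, ((k.factorial : ℝ)⁻¹ * ‖x ^ k‖) *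
      (s ^ k * Real.exp (-s))) atTop (𝓝 0) := by
    simpa using tendsto_finsetSum (range m) fun k _ =>
      (Real.tendsto_pow_mul_exp_neg_atTop_nhds_zero k).const_mul ((k.factorial : ℝ)⁻¹ * ‖x ^ k‖)
  exact squeeze_zero' (Eventually.of_forall fun _ => norm_nonneg _)
    ((eventually_ge_atTop 0).mono hbound) hlim

end NilpotentExp

section ExpApply

theorem map_exp_eq_map_one {𝔸 F : Type*} [NormedRing 𝔸] [NormedAlgebra ℝ 𝔸] [CompleteSpace 𝔸]
    [NormedAddCommGroup F] [NormedSpace ℝ F] (Φ : 𝔸 →L[ℝ] F) {x : 𝔸}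
    (hΦ : ∀ k : ℕ, Φ (x ^ (k + 1)) = 0) : Φ (exp x) = Φ 1 := by
  refine ((exp_series_hasSum_exp' (𝕂 := ℝ) x).mapL Φ).unique ?_
  convert hasSum_single (f := fun k : ℕ => Φ ((k.factorial⁻¹ : ℝ) • x ^ k)) 0 fun k hk => ?_
  · simp
  · obtain ⟨k, rfl⟩ := Nat.exists_eq_succ_of_ne_zero hk
    simp [hΦ]

variable {E : Type*} [NormedAddCommGroup E] [NormedSpace ℝ E] [CompleteSpace E]

theorem exp_apply_of_apply_eq_zero {x : E →L[ℝ] E} {p : E} (hp : x p = 0) : exp x p = p :=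
  map_exp_eq_map_one (ContinuousLinearMap.apply ℝ E p) fun k => by
    simp [pow_succ, mul_apply_eq_comp, hp]

theorem apply_exp_apply_of_comp_eq_zero {x : E →L[ℝ] E} {ℓ : E →L[ℝ] ℝ} (hℓ : ℓ ∘L x = 0)
    (v : E) : ℓ (exp x v) = ℓ v :=
  map_exp_eq_map_one (ℓ ∘L ContinuousLinearMap.apply ℝ E v) fun k => by
    simpa [pow_succ', mul_apply_eq_comp] using congrArg (· ((x ^ k) v)) hℓ

theorem norm_exp_neg_smul_one_add_apply_add_le {N : E →L[ℝ] E} {ℓ : E →L[ℝ] ℝ} {p v : E} {L : ℝ}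
    (hL : 0 ≤ L) (hNp : N p = 0) (hℓN : ℓ ∘L N = 0) (hℓ : ∀ u, ‖ℓ u‖ ≤ ‖u‖) (hp : ‖p‖ ≤ L * ‖ℓ v‖)
    (t : ℝ) : ‖exp ((-t) • (1 + N)) (v + p)‖ ≤ (1 + L) * ‖exp ((-t) • (1 + N)) v‖ := by
  set u := exp ((-t) • N) v
  have hpu : ‖p‖ ≤ L * ‖u‖ := by
    rw [← apply_exp_apply_of_comp_eq_zero (x := (-t) • N) (by simp [hℓN]) v] at hp
    grw [hp, hℓ]
  rw [exp_smul_one_add, smul_apply, smul_apply, map_add,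
    exp_apply_of_apply_eq_zero (x := (-t) • N) (p := p) (by simp [hNp]), norm_smul, norm_smul,
    mul_left_comm]
  gcongr
  grw [norm_add_le, hpu]
  linarith

end ExpApply

section JordanBlock

open Matrix

variable {n : ℕ}

theorem Nmat_pow_apply (k : ℕ) (i j : Fin n) :
    (Nmat n ^ k) i j = if (j : ℕ) = i + k then 1 else 0 := by
  induction k generalizing j with
  | zero => simp [Matrix.one_apply, Fin.ext_iff, eq_comm]
  | succ k ih =>
    rw [pow_succ, Matrix.mul_apply]
    simp only [ih, Nmat, ite_mul, one_mul, zero_mul]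
    by_cases h : (i : ℕ) + k < n
    · rw [Finset.sum_eq_single ⟨i + k, h⟩ (fun l _ hl => if_neg fun h' => hl (Fin.ext h'))
        (by simp)]
      simp [add_assoc]
    · refine (Finset.sum_eq_zero fun l _ => if_neg (by have := l.isLt; omega)).trans ?_
      exact (if_neg (by omega)).symm

theorem Nmat_pow_self : Nmat n ^ n = 0 := by
  ext i j
  rw [Nmat_pow_apply, if_neg (by omega), Matrix.zero_apply]

theorem toEuclideanCLM_Nmat_single_zero (hn : 0 < n) (δ : ℝ) :
    toEuclideanCLM (𝕜 := ℝ) (Nmat n) (EuclideanSpace.single ⟨0, hn⟩ δ) = 0 := by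
  ext i
  simp [Nmat]

theorem proj_last_comp_toEuclideanCLM_Nmat (hn : 0 < n) :
    EuclideanSpace.proj (𝕜 := ℝ) (⟨n - 1, by omega⟩ : Fin n) ∘L toEuclideanCLM (𝕜 := ℝ) (Nmat n) =
      0 := by
  ext u
  change (Nmat n *ᵥ u.ofLp) ⟨n - 1, by omega⟩ = 0
  simp only [Matrix.mulVec, dotProduct, Nmat]
  exact Finset.sum_eq_zero fun j _ => by rw [if_neg (by omega), zero_mul]

theorem toEuclideanCLM_Jmat :
    toEuclideanCLM (𝕜 := ℝ) (Jmat n) = 1 + toEuclideanCLM (𝕜 := ℝ) (Nmat n) := by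
  rw [Jmat, map_add, map_one]

theorem tendsto_norm_exp_neg_smul_toEuclideanCLM_Jmat :
    Tendsto (fun s : ℝ => ‖exp ((-s) • toEuclideanCLM (𝕜 := ℝ) (Jmat n))‖) atTop (𝓝 0) := by
  rw [toEuclideanCLM_Jmat]
  exact tendsto_norm_exp_neg_smul_one_add (by rw [← map_pow, Nmat_pow_self, map_zero])

theorem norm_exp_neg_smul_toEuclideanCLM_Jmat_apply_add_single_le (hn : 0 < n) {L δ : ℝ}
    (hL : 0 ≤ L) {v : EuclideanSpace ℝ (Fin n)} (hδ : |δ| ≤ L * |v ⟨n - 1, by omega⟩|) (t : ℝ) :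
    ‖exp ((-t) • toEuclideanCLM (𝕜 := ℝ) (Jmat n)) (v + EuclideanSpace.single ⟨0, hn⟩ δ)‖ ≤
      (1 + L) * ‖exp ((-t) • toEuclideanCLM (𝕜 := ℝ) (Jmat n)) v‖ := by
  rw [toEuclideanCLM_Jmat]
  exact norm_exp_neg_smul_one_add_apply_add_le hL (toEuclideanCLM_Nmat_single_zero hn δ)
    (proj_last_comp_toEuclideanCLM_Nmat hn) (fun u => PiLp.norm_apply_le u _) (by simpa using hδ) t

end JordanBlock

open Matrix in
theorem Matrix.toEuclideanCLM_exp {ι : Type*} [Fintype ι] [DecidableEq ι] (M : Matrix ι ι ℝ) :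
    toEuclideanCLM (𝕜 := ℝ) (exp M) = exp (toEuclideanCLM (𝕜 := ℝ) M) := by
  open scoped Matrix.Norms.Operator in
  exact map_exp (toEuclideanCLM (𝕜 := ℝ) (n := ι)) (LinearMap.continuous_of_finiteDimensional
    (toEuclideanCLM (𝕜 := ℝ) (n := ι)).toAlgEquiv.toLinearMap) M

theorem parabolicD_of_ne {ι : Type*} [Fintype ι] [DecidableEq ι] (A : Matrix ι ι ℝ)
    {x y : EuclideanSpace ℝ ι} (hxy : x ≠ y) :
    parabolicD A x y =
      Real.exp (sInf (sphereTimes (Matrix.toEuclideanCLM (𝕜 := ℝ) A) (x - y))) := by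
  rw [parabolicD, if_neg hxy]
  congr 2
  ext t
  change _ ↔ ‖exp ((-t) • Matrix.toEuclideanCLM (𝕜 := ℝ) A) (x - y)‖ = 1
  rw [← map_smul, ← Matrix.toEuclideanCLM_exp]
  rfl

theorem shiftMap_sub {n : ℕ} (hn : 2 ≤ n) (C : ℝ → ℝ) (x y : EuclideanSpace ℝ (Fin n)) :
    shiftMap hn C x - shiftMap hn C y = x - y +
      EuclideanSpace.single ⟨0, by omega⟩ (C (x ⟨n - 1, by omega⟩) - C (y ⟨n - 1, by omega⟩)) := by
  ext j
  by_cases hj : j = ⟨0, by omega⟩ <;> simp [shiftMap, hj]; ring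

theorem shear_is_biLipschitz_general {n : ℕ} (hn : 2 ≤ n) (L : ℝ) :
    ∃ L' : ℝ, 1 ≤ L' ∧ ∀ C : ℝ → ℝ, (∀ s t : ℝ, |C s - C t| ≤ L * |s - t|) →
      ∀ x y : EuclideanSpace ℝ (Fin n),
        parabolicD (Jmat n) x y / L' ≤ parabolicD (Jmat n) (shiftMap hn C x) (shiftMap hn C y) ∧
        parabolicD (Jmat n) (shiftMap hn C x) (shiftMap hn C y) ≤ L' * parabolicD (Jmat n) x y := by
  have hdecay := tendsto_norm_exp_neg_smul_toEuclideanCLM_Jmat (n := n)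
  obtain ⟨s, hs, hs0⟩ := (((hdecay.mul_const (1 + L)).eventually
    (ge_mem_nhds (by simp : (0 : ℝ) * (1 + L) < 1))).and (eventually_ge_atTop 0)).exists
  refine ⟨Real.exp s, Real.one_le_exp hs0, fun C hC x y => ?_⟩
  have hL : 0 ≤ L := (abs_nonneg _).trans (by simpa using hC 1 0)
  by_cases hxy : x = y
  · simp [parabolicD, hxy]
  set δ := C (x ⟨n - 1, by omega⟩) - C (y ⟨n - 1, by omega⟩)
  have hn0 : 0 < n := by omega
  have hwv := norm_exp_neg_smul_toEuclideanCLM_Jmat_apply_add_single_le hn0 hL (v := x - y)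
    (δ := δ) (hC _ _)
  have hvw := norm_exp_neg_smul_toEuclideanCLM_Jmat_apply_add_single_le hn0 hL
    (v := x - y + EuclideanSpace.single ⟨0, hn0⟩ δ) (δ := -δ)
    (by simpa [Fin.ext_iff, show n - 1 ≠ 0 by omega] using hC _ _)
  simp only [EuclideanSpace.single, PiLp.single_neg, add_neg_cancel_right] at hvw
  have hw := ne_zero_of_forall_norm_exp_neg_smul_apply_le (sub_ne_zero.mpr hxy) hvw
  have key := abs_sInf_sphereTimes_sub_le hdecay (sub_ne_zero.mpr hxy) hw (by linarith) hs hwv hvw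
  rw [← shiftMap_sub hn] at hw key
  rw [parabolicD_of_ne _ hxy, parabolicD_of_ne _ (sub_ne_zero.mp hw)]
  obtain ⟨h₁, h₂⟩ := abs_sub_le_iff.mp key
  rw [div_le_iff₀ (Real.exp_pos _), ← Real.exp_add, ← Real.exp_add, Real.exp_le_exp,
    Real.exp_le_exp]
  constructor <;> linarith

/-- Lemma 6.2: if `C : ℝ → ℝ` is `L`-Lipschitz then `F₂(x) = x + (C(xₙ),0,…,0)ᵀ` is
`L'`-biLipschitz on `(ℝⁿ, D_{Jₙ})`, with `L'` depending only on `L` and `n`. -/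
theorem shear_is_biLipschitz {n : ℕ} (hn : 2 ≤ n) (L : ℝ) (hL : 0 < L) :
    ∃ L' : ℝ, 1 ≤ L' ∧ ∀ C : ℝ → ℝ, (∀ s t : ℝ, |C s - C t| ≤ L * |s - t|) →
      ∀ x y : EuclideanSpace ℝ (Fin n),
        parabolicD (Jmat n) x y / L' ≤ parabolicD (Jmat n) (shiftMap hn C x) (shiftMap hn C y) ∧
        parabolicD (Jmat n) (shiftMap hn C x) (shiftMap hn C y) ≤ L' * parabolicD (Jmat n) x y :=
  shear_is_biLipschitz_general hn L
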